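/- The sentence Δ∃x A(x) ⊃ ∃x ΔA(x) (for a unary predicate A) is valid in G_{V_m}^Δ for every m ≥ 2 but is not valid in G_{V_↑}^Δ; consequently G_{V_↑}^Δ is not the intersection of the finite-valued Gödel logics with Δ: there is a sentence valid in every G_{V_m}^Δ that is not valid in G_{V_↑}^Δ. -/

import Mathlib

namespace GodelPaper

/-- A first-order language: function and relation symbols of each arity. -/
structure Lang where
  Func : ℕ → Type
  Rel : ℕ → Type

/-- A Gödel set: a closed subset of [0,1] containing 0 and 1. -/
def GodelSet (V : Set ℝ) : Prop :=
  IsClosed V ∧ V ⊆ Set.Icc 0 1 ∧ (0:ℝ) ∈ V ∧ (1:ℝ) ∈ V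

/-- Terms with variables from `α`. -/
inductive Term (L : Lang) (α : Type) : Type
  | var : α → Term L α
  | func : ∀ {k}, L.Func k → (Fin k → Term L α) → Term L α

/-- A `V`-interpretation: nonempty domain, interpretation of function symbols,
and truth values in `V` for atomic sentences with parameters. -/
structure Interp (L : Lang) (V : Set ℝ) where
  Dom : Type
  dom_nonempty : Nonempty Dom
  funMap : ∀ {k}, L.Func k → (Fin k → Dom) → Dom
  relVal : ∀ {k}, L.Rel k → (Fin k → Dom) → ℝ
  relVal_mem : ∀ {k} (R : L.Rel k) (v : Fin k → Dom), relVal R v ∈ V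

def Term.eval {L : Lang} {V : Set ℝ} (I : Interp L V) {α : Type} (v : α → I.Dom) :
    Term L α → I.Dom
  | .var i => v i
  | .func f ts => I.funMap f fun j => Term.eval I v (ts j)

/-- Formulas of the Δ-extended language, with free variables among `Fin n`.
The quantifiers bind the *last* variable. Δ-free formulas (i.e. formulas of the
plain language) are singled out by the predicate `DeltaFree` below. -/
inductive Form (L : Lang) : ℕ → Type
  | falsum : ∀ {n}, Form L n
  | atom : ∀ {n k}, L.Rel k → (Fin k → Term L (Fin n)) → Form L n
  | conj : ∀ {n}, Form L n → Form L n → Form L n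
  | disj : ∀ {n}, Form L n → Form L n → Form L n
  | impl : ∀ {n}, Form L n → Form L n → Form L n
  | delta : ∀ {n}, Form L n → Form L n
  | all : ∀ {n}, Form L (n+1) → Form L n
  | ex : ∀ {n}, Form L (n+1) → Form L n

/-- The Gödel truth value of a formula under an interpretation and an
assignment of the free variables. -/
noncomputable def Form.val {L : Lang} {V : Set ℝ} (I : Interp L V) :
    ∀ {n}, Form L n → (Fin n → I.Dom) → ℝ
  | _, .falsum, _ => 0
  | _, .atom R ts, ρ => I.relVal R fun j => Term.eval I ρ (ts j)
  | _, .conj A B, ρ => min (Form.val I A ρ) (Form.val I B ρ)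
  | _, .disj A B, ρ => max (Form.val I A ρ) (Form.val I B ρ)
  | _, .impl A B, ρ => if Form.val I A ρ ≤ Form.val I B ρ then 1 else Form.val I B ρ
  | _, .delta A, ρ => if Form.val I A ρ = 1 then 1 else 0
  | _, .all A, ρ => sInf {v : ℝ | ∃ d : I.Dom, v = Form.val I A (Fin.snoc ρ d)}
  | _, .ex A, ρ => sSup {v : ℝ | ∃ d : I.Dom, v = Form.val I A (Fin.snoc ρ d)}

/-- The value of a sentence. -/
noncomputable def Form.sval {L : Lang} {V : Set ℝ} (I : Interp L V) (A : Form L 0) : ℝ :=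
  Form.val I A Fin.elim0

/-- `A` is valid in `G_V`. -/
def Valid {L : Lang} (V : Set ℝ) (A : Form L 0) : Prop :=
  ∀ I : Interp L V, Form.sval I A = 1

/-- `A` is 1-satisfiable in `G_V`. -/
def OneSat {L : Lang} (V : Set ℝ) (A : Form L 0) : Prop :=
  ∃ I : Interp L V, Form.sval I A = 1

/-- `A` is classically satisfiable: it takes value 1 under a `V`-interpretation
assigning only values in {0,1} to atomic sentences. -/
def ClassSat {L : Lang} (V : Set ℝ) (A : Form L 0) : Prop :=
  ∃ I : Interp L V,
    (∀ {k : ℕ} (R : L.Rel k) (v : Fin k → I.Dom), I.relVal R v = 0 ∨ I.relVal R v = 1) ∧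
    Form.sval I A = 1

/-- ¬A abbreviates A ⊃ ⊥. -/
def Form.not {L : Lang} {n : ℕ} (A : Form L n) : Form L n := Form.impl A Form.falsum

/-- A ↔ B abbreviates (A ⊃ B) ∧ (B ⊃ A). -/
def Form.iff {L : Lang} {n : ℕ} (A B : Form L n) : Form L n :=
  Form.conj (Form.impl A B) (Form.impl B A)

/-- Formulas of the plain language (no Δ). -/
def DeltaFree {L : Lang} : ∀ {n}, Form L n → Prop
  | _, .falsum => True
  | _, .atom _ _ => True
  | _, .conj A B => DeltaFree A ∧ DeltaFree B
  | _, .disj A B => DeltaFree A ∧ DeltaFree B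
  | _, .impl A B => DeltaFree A ∧ DeltaFree B
  | _, .delta _ => False
  | _, .all A => DeltaFree A
  | _, .ex A => DeltaFree A

/-- Quantifier-free formulas. -/
def QuantFree {L : Lang} : ∀ {n}, Form L n → Prop
  | _, .falsum => True
  | _, .atom _ _ => True
  | _, .conj A B => QuantFree A ∧ QuantFree B
  | _, .disj A B => QuantFree A ∧ QuantFree B
  | _, .impl A B => QuantFree A ∧ QuantFree B
  | _, .delta A => QuantFree A
  | _, .all _ => False
  | _, .ex _ => False

/-- Formulas containing no universal quantifier. -/
def AllFree {L : Lang} : ∀ {n}, Form L n → Prop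
  | _, .falsum => True
  | _, .atom _ _ => True
  | _, .conj A B => AllFree A ∧ AllFree B
  | _, .disj A B => AllFree A ∧ AllFree B
  | _, .impl A B => AllFree A ∧ AllFree B
  | _, .delta A => AllFree A
  | _, .all _ => False
  | _, .ex A => AllFree A

/-- Prenex formulas: a block of quantifiers followed by a quantifier-free matrix. -/
inductive IsPrenex {L : Lang} : ∀ {n}, Form L n → Prop
  | qf {n} {A : Form L n} : QuantFree A → IsPrenex A
  | all {n} {A : Form L (n+1)} : IsPrenex A → IsPrenex (Form.all A)
  | ex {n} {A : Form L (n+1)} : IsPrenex A → IsPrenex (Form.ex A)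

/-- Purely existential prenex formulas. -/
inductive ExPrenex {L : Lang} : ∀ {n}, Form L n → Prop
  | qf {n} {A : Form L n} : QuantFree A → ExPrenex A
  | ex {n} {A : Form L (n+1)} : ExPrenex A → ExPrenex (Form.ex A)

/-- The glued interpretation `I_ω`: atoms with value ≤ ω keep their value,
all other atoms get value 1. Same domain and function interpretations. -/
noncomputable def Interp.glue {L : Lang} {V : Set ℝ} (I : Interp L V) (ω : ℝ)
    (h1 : (1:ℝ) ∈ V) : Interp L V where
  Dom := I.Dom
  dom_nonempty := I.dom_nonempty
  funMap := fun {k} f v => I.funMap f v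
  relVal := fun {k} R v => if I.relVal R v ≤ ω then I.relVal R v else 1
  relVal_mem := fun {k} R v => by
    by_cases h : I.relVal R v ≤ ω
    · simpa [h] using I.relVal_mem R v
    · simpa [h] using h1

/-- The Gödel set `V_↑ = {1 - 1/k : k ≥ 1} ∪ {1}`. -/
def Vup : Set ℝ := {x : ℝ | ∃ k : ℕ, 1 ≤ k ∧ x = 1 - 1/(k:ℝ)} ∪ {1}

/-- The `m`-element Gödel set `V_m = {1 - 1/k : 1 ≤ k ≤ m-1} ∪ {1}`. -/
def Vfin (m : ℕ) : Set ℝ :=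
  {x : ℝ | ∃ k : ℕ, 1 ≤ k ∧ k ≤ m - 1 ∧ x = 1 - 1/(k:ℝ)} ∪ {1}

/-- Atomic formula built from a unary predicate. -/
def atom1 {L : Lang} (P : L.Rel 1) {n : ℕ} (t : Term L (Fin n)) : Form L n :=
  Form.atom P fun _ => t

/-- Atomic formula built from a 0-ary predicate (propositional atom). -/
def atom0 {L : Lang} (X : L.Rel 0) {n : ℕ} : Form L n :=
  Form.atom X fun i => i.elim0

def Term.rename {L : Lang} {α β : Type} (f : α → β) : Term L α → Term L β
  | .var i => .var (f i)
  | .func g ts => .func g fun j => Term.rename f (ts j)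

def Form.rename {L : Lang} : ∀ {m n}, (Fin m → Fin n) → Form L m → Form L n
  | _, _, _, .falsum => .falsum
  | _, _, f, .atom R ts => .atom R fun j => (ts j).rename f
  | _, _, f, .conj A B => .conj (A.rename f) (B.rename f)
  | _, _, f, .disj A B => .disj (A.rename f) (B.rename f)
  | _, _, f, .impl A B => .impl (A.rename f) (B.rename f)
  | _, _, f, .delta A => .delta (A.rename f)
  | _, _, f, .all A =>
      .all (A.rename (Fin.lastCases (Fin.last _) fun i => Fin.castSucc (f i)))
  | _, _, f, .ex A =>
      .ex (A.rename (Fin.lastCases (Fin.last _) fun i => Fin.castSucc (f i)))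

/-- Weakening: regard a formula with `n` free variables as one with `n+1`
free variables (not using the new last variable). -/
def Form.lift {L : Lang} {n : ℕ} (A : Form L n) : Form L (n+1) :=
  A.rename Fin.castSucc

def Term.subst {L : Lang} {α β : Type} (σ : α → Term L β) : Term L α → Term L β
  | .var i => σ i
  | .func g ts => .func g fun j => Term.subst σ (ts j)

def Form.subst {L : Lang} : ∀ {m n}, (Fin m → Term L (Fin n)) → Form L m → Form L n
  | _, _, _, .falsum => .falsum
  | _, _, σ, .atom R ts => .atom R fun j => (ts j).subst σ
  | _, _, σ, .conj A B => .conj (A.subst σ) (B.subst σ)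
  | _, _, σ, .disj A B => .disj (A.subst σ) (B.subst σ)
  | _, _, σ, .impl A B => .impl (A.subst σ) (B.subst σ)
  | _, _, σ, .delta A => .delta (A.subst σ)
  | _, _, σ, .all A =>
      .all (A.subst (Fin.lastCases (.var (Fin.last _))
        fun i => (σ i).rename Fin.castSucc))
  | _, _, σ, .ex A =>
      .ex (A.subst (Fin.lastCases (.var (Fin.last _))
        fun i => (σ i).rename Fin.castSucc))

/-- The language `L ∪ {f}` with one new function symbol of arity `a`. -/
def Lang.addFunc (L : Lang) (a : ℕ) : Lang where
  Func := fun k => L.Func k ⊕ PLift (k = a)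
  Rel := L.Rel

/-- The new function symbol of `L.addFunc a`. -/
def newFunc (L : Lang) (a : ℕ) : (L.addFunc a).Func a := Sum.inr ⟨rfl⟩

def Term.emb {L : Lang} {a : ℕ} {α : Type} : Term L α → Term (L.addFunc a) α
  | .var i => .var i
  | .func g ts => .func (Sum.inl g) fun j => Term.emb (ts j)

/-- Embedding of `L`-formulas into the language with the extra function symbol. -/
def Form.emb {L : Lang} {a : ℕ} : ∀ {n}, Form L n → Form (L.addFunc a) n
  | _, .falsum => .falsum
  | _, .atom R ts => .atom R fun j => (ts j).emb
  | _, .conj A B => .conj A.emb B.emb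
  | _, .disj A B => .disj A.emb B.emb
  | _, .impl A B => .impl A.emb B.emb
  | _, .delta A => .delta A.emb
  | _, .all A => .all A.emb
  | _, .ex A => .ex A.emb

/-- Prefix of `n` existential quantifiers (outermost quantifier binds variable 0). -/
def Form.exN {L : Lang} : ∀ n, Form L n → Form L 0
  | 0, A => A
  | n+1, A => Form.exN n (Form.ex A)

/-- Prefix of `n` universal quantifiers (outermost quantifier binds variable 0). -/
def Form.allN {L : Lang} : ∀ n, Form L n → Form L 0
  | 0, A => A
  | n+1, A => Form.allN n (Form.all A)

/-!
Under any interpretation, `Δ∃x P(x) ⊃ ∃x ΔP(x)` has value 1 unless the values of `P(d)` have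
supremum 1 without any of them being 1. In `V_m` the value 1 is isolated (all other values are
at most `1 - 1/(m-1)`), so a supremum 1 is attained. In `V_↑` the values `1 - 1/(n+1)` have
supremum 1 but never reach it, and assigning them to `P(n)` over the domain `ℕ` refutes the
sentence.
-/

section DeltaWitness

variable {L : Lang} {V : Set ℝ}

lemma Form.val_ex (I : Interp L V) {n : ℕ} (A : Form L (n+1)) (ρ : Fin n → I.Dom) :
    Form.val I (Form.ex A) ρ = ⨆ d, Form.val I A (Fin.snoc ρ d) := by
  simp only [Form.val, iSup, Set.range, eq_comm]

lemma Form.val_atom1_var_zero (I : Interp L V) (P : L.Rel 1) (d : I.Dom) :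
    Form.val I (atom1 P (Term.var 0)) (Fin.snoc Fin.elim0 d) = I.relVal P fun _ => d :=
  rfl

def deltaExImpExDelta (P : L.Rel 1) : Form L 0 :=
  Form.impl (Form.delta (Form.ex (atom1 P (Term.var 0))))
    (Form.ex (Form.delta (atom1 P (Term.var 0))))

lemma godelImp_delta_iSup_eq_one_iff {ι : Type*} (p : ι → ℝ) :
    (if (if (⨆ i, p i) = 1 then 1 else 0) ≤ ⨆ i, (if p i = 1 then (1 : ℝ) else 0) then 1
      else ⨆ i, if p i = 1 then (1 : ℝ) else 0) = 1 ↔ ((⨆ i, p i) = 1 → ∃ i, p i = 1) := by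
  set q : ℝ := ⨆ i, if p i = 1 then 1 else 0
  by_cases hsup : (⨆ i, p i) = 1
  · simp only [hsup, if_true, true_imp_iff]
    constructor
    · intro h
      by_contra! hne
      have hq : q = 0 := by simp [q, hne]
      simp [hq] at h
    · rintro ⟨i, hi⟩
      have hbdd : BddAbove (Set.range fun i => if p i = 1 then (1 : ℝ) else 0) := by
        refine ⟨1, ?_⟩
        rintro _ ⟨j, rfl⟩
        dsimp only
        split_ifs <;> norm_num
      have hq : 1 ≤ q := le_ciSup_of_le hbdd i (by simp [hi])
      simp [hq]
  · have hq : 0 ≤ q := Real.iSup_nonneg fun i => by split_ifs <;> norm_num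
    simp [hsup, hq]

theorem sval_deltaExImpExDelta_eq_one_iff (I : Interp L V) (P : L.Rel 1) :
    (deltaExImpExDelta P).sval I = 1 ↔
      ((⨆ d, I.relVal P fun _ => d) = 1 → ∃ d, I.relVal P (fun _ => d) = 1) := by
  simp only [deltaExImpExDelta, Form.sval, Form.val.eq_5, Form.val.eq_6, Form.val_ex,
    Form.val_atom1_var_zero]
  exact godelImp_delta_iSup_eq_one_iff _

theorem valid_deltaExImpExDelta_of_le_of_ne_one {c : ℝ} (hc : c < 1)
    (hV : ∀ x ∈ V, x ≠ 1 → x ≤ c) (P : L.Rel 1) : Valid V (deltaExImpExDelta P) := by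
  intro I
  rw [sval_deltaExImpExDelta_eq_one_iff]
  intro hsup
  by_contra! hne
  have := I.dom_nonempty
  have : (⨆ d, I.relVal P fun _ => d) ≤ c :=
    ciSup_le fun d => hV _ (I.relVal_mem P _) (hne d)
  linarith

-- Only unary atoms matter; summing the arguments just picks some value in `V` for the others.
noncomputable def Interp.ofSeq (L : Lang) (u : ℕ → ℝ) (hu : ∀ n, u n ∈ V) : Interp L V where
  Dom := ℕ
  dom_nonempty := ⟨0⟩
  funMap _ _ := 0
  relVal _ v := u (∑ i, v i)
  relVal_mem _ _ := hu _

theorem not_valid_deltaExImpExDelta_of_iSup_eq_one {u : ℕ → ℝ} (hu : ∀ n, u n ∈ V)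
    (hlt : ∀ n, u n < 1) (hsup : ⨆ n, u n = 1) (P : L.Rel 1) :
    ¬ Valid V (deltaExImpExDelta P) := by
  intro h
  have := (sval_deltaExImpExDelta_eq_one_iff (Interp.ofSeq L u hu) P).1 (h _)
  simp only [Interp.ofSeq, Finset.univ_unique, Finset.sum_singleton] at this
  obtain ⟨n, hn⟩ := this hsup
  exact (hlt n).ne hn

end DeltaWitness

lemma mem_Vfin_le_of_ne_one {m : ℕ} {x : ℝ} (hx : x ∈ Vfin m) (hx1 : x ≠ 1) :
    x ≤ 1 - 1 / ((m - 1 : ℕ) : ℝ) := by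
  obtain ⟨k, hk1, hkm, rfl⟩ : ∃ k : ℕ, 1 ≤ k ∧ k ≤ m - 1 ∧ x = 1 - 1 / (k : ℝ) := by
    simpa [Vfin, hx1] using hx
  have hk : (0 : ℝ) < k := by exact_mod_cast hk1
  have := one_div_le_one_div_of_le hk (by exact_mod_cast hkm : (k : ℝ) ≤ ((m - 1 : ℕ) : ℝ))
  linarith

lemma one_sub_one_div_succ_mem_Vup (n : ℕ) : 1 - 1 / ((n : ℝ) + 1) ∈ Vup :=
  Or.inl ⟨n + 1, by omega, by push_cast; rfl⟩

lemma iSup_one_sub_one_div_succ : ⨆ n : ℕ, (1 - 1 / ((n : ℝ) + 1)) = 1 := by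
  have hmono : Monotone fun n : ℕ => 1 - 1 / ((n : ℝ) + 1) := fun a b hab => by
    dsimp only
    gcongr
  have hbdd : BddAbove (Set.range fun n : ℕ => 1 - 1 / ((n : ℝ) + 1)) :=
    ⟨1, by rintro _ ⟨n, rfl⟩; simp only [sub_le_self_iff]; positivity⟩
  have hlim : Filter.Tendsto (fun n : ℕ => 1 - 1 / ((n : ℝ) + 1)) Filter.atTop (nhds 1) := by
    simpa using (tendsto_one_div_add_atTop_nhds_zero_nat (𝕜 := ℝ)).const_sub (1 : ℝ)
  exact tendsto_nhds_unique (tendsto_atTop_ciSup hmono hbdd) hlim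

/-- The sentence `Δ∃x P(x) ⊃ ∃x ΔP(x)` is valid in `G_{V_m}^Δ`
for every `m ≥ 2` but not valid in `G_{V_↑}^Δ`; consequently `G_{V_↑}^Δ` is
not the intersection of the finite-valued Gödel logics with Δ: there is a
sentence valid in every `G_{V_m}^Δ` that is not valid in `G_{V_↑}^Δ`. -/
theorem stmt_15 {L : Lang} (P : L.Rel 1) :
    (∀ m : ℕ, 2 ≤ m → Valid (Vfin m)
      (Form.impl (Form.delta (Form.ex (atom1 P (Term.var 0))))
        (Form.ex (Form.delta (atom1 P (Term.var 0)))))) ∧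
    ¬ Valid Vup
      (Form.impl (Form.delta (Form.ex (atom1 P (Term.var 0))))
        (Form.ex (Form.delta (atom1 P (Term.var 0))))) ∧
    ∃ C : Form L 0, (∀ m : ℕ, 2 ≤ m → Valid (Vfin m) C) ∧ ¬ Valid Vup C := by
  have hfin : ∀ m : ℕ, 2 ≤ m → Valid (Vfin m) (deltaExImpExDelta P) := fun m hm => by
    have hm1 : (0 : ℝ) < ((m - 1 : ℕ) : ℝ) := by exact_mod_cast (by omega : 0 < m - 1)
    exact valid_deltaExImpExDelta_of_le_of_ne_one (by simp [hm1])
      (fun _ hx hx1 => mem_Vfin_le_of_ne_one hx hx1) P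
  have hup : ¬ Valid Vup (deltaExImpExDelta P) :=
    not_valid_deltaExImpExDelta_of_iSup_eq_one one_sub_one_div_succ_mem_Vup
      (fun n => by simp only [sub_lt_self_iff]; positivity) iSup_one_sub_one_div_succ P
  exact ⟨hfin, hup, _, hfin, hup⟩

end GodelPaper
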